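/- arXiv:2605.00429 — 4 statements merged into one kernel-verified Lean document; each statement's English description precedes it below -/
import Mathlib

section
/- Let S be a nonempty finite set of points in ℝ³, let P = convexHull ℝ S be the convex polyhedron they span, and let v be any point of ℝ³. Then the continuous union of closed balls centered at all points of P, each with radius equal to its distance to v, equals the finite union of closed balls centered at the points of S: ⋃_{x ∈ P} closedBall(x, dist x v) = ⋃_{u ∈ S} closedBall(u, dist u v). -/
/-!
A point `p` lies in `closedBall x (dist x v)` iff `x` is at least as close to `p` as to `v`.
The points strictly closer to `v` than to `p` form an open half-space, which is convex; so if
every point of `s` lies in it, so does every point of `convexHull ℝ s`.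
-/

open Metric

section InnerProductSpace

variable {E : Type*} [NormedAddCommGroup E] [InnerProductSpace ℝ E]

theorem dist_sq_sub_dist_sq (y v p : E) :
    dist y p ^ 2 - dist y v ^ 2 = ‖p‖ ^ 2 - ‖v‖ ^ 2 - 2 * inner ℝ (p - v) y := by
  rw [dist_eq_norm, dist_eq_norm, norm_sub_sq_real, norm_sub_sq_real, inner_sub_left,
    real_inner_comm y p, real_inner_comm y v]
  ring

theorem convex_setOf_dist_lt_dist (v p : E) : Convex ℝ {y : E | dist y v < dist y p} := by
  have hset : {y : E | dist y v < dist y p} =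
      {y | innerSL ℝ (p - v) y < (‖p‖ ^ 2 - ‖v‖ ^ 2) / 2} := by
    ext y
    have hsq := dist_sq_sub_dist_sq y v p
    simp only [Set.mem_ofPred_eq, innerSL_apply_apply, ← sq_lt_sq₀ dist_nonneg dist_nonneg]
    constructor <;> intro h <;> linarith
  rw [hset]
  exact convex_halfSpace_lt (innerSL ℝ (p - v)).toLinearMap.isLinear _

theorem biUnion_convexHull_closedBall_dist (s : Set E) (v : E) :
    ⋃ x ∈ convexHull ℝ s, closedBall x (dist x v) = ⋃ u ∈ s, closedBall u (dist u v) := by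
  refine subset_antisymm ?_ (Set.biUnion_subset_biUnion_left (subset_convexHull ℝ s))
  intro p
  simp only [mem_closedBall, Set.mem_iUnion, exists_prop]
  rintro ⟨x, hx, hpx⟩
  by_contra! hfar
  have hs : s ⊆ {y | dist y v < dist y p} := fun u hu => by
    simpa [dist_comm p u] using hfar u hu
  have hcloser : dist x v < dist x p := convexHull_min hs (convex_setOf_dist_lt_dist v p) hx
  rw [dist_comm x p] at hcloser
  exact hpx.not_gt hcloser

end InnerProductSpace

theorem vertex_sphere_union_closed_general
    (S : Finset (EuclideanSpace ℝ (Fin 3)))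
    (v : EuclideanSpace ℝ (Fin 3)) :
    (⋃ x ∈ convexHull ℝ (S : Set (EuclideanSpace ℝ (Fin 3))), closedBall x (dist x v)) =
      ⋃ u ∈ (S : Set (EuclideanSpace ℝ (Fin 3))), closedBall u (dist u v) :=
  biUnion_convexHull_closedBall_dist _ v

/-- **Vertex Sphere Union Theorem.** For a nonempty finite set `S` of points in `ℝ³`
spanning the convex polyhedron `P = convexHull ℝ S`, and any point `v`, the union of
closed balls centered at all points `x ∈ P` with radius `dist x v` equals the finite
union of closed balls centered at the points of `S`. -/
theorem vertex_sphere_union_closed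
    (S : Finset (EuclideanSpace ℝ (Fin 3))) (hS : S.Nonempty)
    (v : EuclideanSpace ℝ (Fin 3)) :
    (⋃ x ∈ convexHull ℝ (S : Set (EuclideanSpace ℝ (Fin 3))), closedBall x (dist x v)) =
      ⋃ u ∈ (S : Set (EuclideanSpace ℝ (Fin 3))), closedBall u (dist u v) :=
  vertex_sphere_union_closed_general S v
end

section
/- Let S be a nonempty finite set of points in ℝ³ and let v, p be points of ℝ³. If there exists x ∈ convexHull ℝ S with dist p x ≤ dist x v, then there exists a vertex u ∈ S with dist p u ≤ dist u v. -/
open Metric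

/-!
The points strictly closer to `v` than to `p` form an open half-space: expanding the squares,
`‖u - v‖² < ‖u - p‖²` is the affine inequality `⟪p - v, u⟫ < (‖p‖² - ‖v‖²) / 2`. A half-space is
convex, so if every vertex lay in it, so would the whole convex hull.
-/

open RealInnerProductSpace

section HalfSpace

variable {E : Type*} [NormedAddCommGroup E] [InnerProductSpace ℝ E]

theorem dist_lt_dist_iff_inner_lt (u a b : E) :
    dist u a < dist u b ↔ ⟪b - a, u⟫ < (‖b‖ ^ 2 - ‖a‖ ^ 2) / 2 := by
  rw [dist_eq_norm, dist_eq_norm, ← sq_lt_sq₀ (norm_nonneg _) (norm_nonneg _),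
    norm_sub_sq_real, norm_sub_sq_real, inner_sub_left, real_inner_comm a, real_inner_comm b]
  constructor <;> intro <;> linarith

theorem convex_setOf_dist_lt_dist_s1 (a b : E) : Convex ℝ {u : E | dist u a < dist u b} := by
  simp only [dist_lt_dist_iff_inner_lt]
  exact convex_halfSpace_lt (innerₛₗ ℝ (b - a)).isLinear _

end HalfSpace

theorem exists_vertex_of_mem_convexHull_ball_general
    (S : Finset (EuclideanSpace ℝ (Fin 3)))
    (v p : EuclideanSpace ℝ (Fin 3))
    (h : ∃ x ∈ convexHull ℝ (S : Set (EuclideanSpace ℝ (Fin 3))), dist p x ≤ dist x v) :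
    ∃ u ∈ S, dist p u ≤ dist u v := by
  obtain ⟨x, hx, hpx⟩ := h
  by_contra! h_far
  have hull_sub : convexHull ℝ (S : Set (EuclideanSpace ℝ (Fin 3))) ⊆ {u | dist u v < dist u p} :=
    convexHull_min (fun u hu => by simpa [dist_comm p u] using h_far u hu)
      (convex_setOf_dist_lt_dist_s1 v p)
  have hx_far : dist x v < dist x p := hull_sub hx
  exact hx_far.not_ge (by rwa [dist_comm] at hpx)

/-- The nontrivial inclusion of the Vertex Sphere Union Theorem: if some point `x` of the
convex hull of a nonempty finite set `S` satisfies `dist p x ≤ dist x v`, then some vertex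
`u ∈ S` satisfies `dist p u ≤ dist u v`. -/
theorem exists_vertex_of_mem_convexHull_ball
    (S : Finset (EuclideanSpace ℝ (Fin 3))) (hS : S.Nonempty)
    (v p : EuclideanSpace ℝ (Fin 3))
    (h : ∃ x ∈ convexHull ℝ (S : Set (EuclideanSpace ℝ (Fin 3))), dist p x ≤ dist x v) :
    ∃ u ∈ S, dist p u ≤ dist u v :=
  exists_vertex_of_mem_convexHull_ball_general S v p h
end

section
/- Let S be a nonempty finite set of points in ℝ³, let P = convexHull ℝ S, and let v be any point of ℝ³. Then the union of open balls centered at all points of P, each with radius equal to its distance to v, equals the finite union of open balls centered at the points of S: ⋃_{x ∈ P} ball(x, dist x v) = ⋃_{u ∈ S} ball(u, dist u v). -/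
/-!
A point `p` lies in `ball x (dist x v)` exactly when `x` is strictly closer to `p` than to `v`.
The points at least as close to `v` as to `p` form a closed half-space, which is convex; so if it
contains every vertex it contains the whole convex hull.
-/

open Metric RealInnerProductSpace

variable {E : Type*} [NormedAddCommGroup E] [InnerProductSpace ℝ E]

theorem dist_sq_sub_dist_sq_eq_inner (x p v : E) :
    dist x v ^ 2 - dist x p ^ 2 = 2 * ⟪x, p - v⟫ - (‖p‖ ^ 2 - ‖v‖ ^ 2) := by
  rw [dist_eq_norm, dist_eq_norm, norm_sub_sq_real, norm_sub_sq_real, inner_sub_right]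
  ring

theorem convex_setOf_dist_le_dist (p v : E) : Convex ℝ {x : E | dist x v ≤ dist x p} := by
  have hhalf : {x : E | dist x v ≤ dist x p} = {x | ⟪p - v, x⟫ ≤ (‖p‖ ^ 2 - ‖v‖ ^ 2) / 2} := by
    ext x
    have := dist_sq_sub_dist_sq_eq_inner x p v
    rw [Set.mem_ofPred_eq, Set.mem_ofPred_eq, real_inner_comm, ← sq_le_sq₀ dist_nonneg dist_nonneg]
    constructor <;> intro h <;> linarith
  rw [hhalf]
  exact convex_halfSpace_le (innerₛₗ ℝ (p - v)).isLinear _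

theorem biUnion_ball_dist_convexHull (s : Set E) (v : E) :
    ⋃ x ∈ convexHull ℝ s, ball x (dist x v) = ⋃ u ∈ s, ball u (dist u v) := by
  refine subset_antisymm ?_ (Set.biUnion_subset_biUnion_left (subset_convexHull ℝ s))
  intro p hp
  by_contra hnot
  simp only [Set.mem_iUnion, mem_ball, exists_prop, not_exists, not_and, not_lt] at hp hnot
  have hs : s ⊆ {x | dist x v ≤ dist x p} := fun u hu =>
    show dist u v ≤ dist u p from dist_comm p u ▸ hnot u hu
  obtain ⟨x, hx, hpx⟩ := hp
  have hxv := convexHull_min hs (convex_setOf_dist_le_dist p v) hx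
  exact (dist_comm p x ▸ hpx).not_ge hxv

theorem vertex_sphere_union_open_general
    (S : Finset (EuclideanSpace ℝ (Fin 3)))
    (v : EuclideanSpace ℝ (Fin 3)) :
    (⋃ x ∈ convexHull ℝ (S : Set (EuclideanSpace ℝ (Fin 3))), ball x (dist x v)) =
      ⋃ u ∈ (S : Set (EuclideanSpace ℝ (Fin 3))), ball u (dist u v) :=
  biUnion_ball_dist_convexHull _ v

/-- Open-ball variant of the Vertex Sphere Union Theorem. -/
theorem vertex_sphere_union_open
    (S : Finset (EuclideanSpace ℝ (Fin 3))) (hS : S.Nonempty)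
    (v : EuclideanSpace ℝ (Fin 3)) :
    (⋃ x ∈ convexHull ℝ (S : Set (EuclideanSpace ℝ (Fin 3))), ball x (dist x v)) =
      ⋃ u ∈ (S : Set (EuclideanSpace ℝ (Fin 3))), ball u (dist u v) :=
  vertex_sphere_union_open_general S v
end

section
/- Let S be a nonempty finite set of points in ℝ³, let s and w be points of ℝ³, and set r = max_{u ∈ S} (dist s u + dist u w). Then for every x in convexHull ℝ S, the closed ball closedBall(x, dist x w) is contained in closedBall(s, r); equivalently, ⋃_{x ∈ convexHull ℝ S} closedBall(x, dist x w) ⊆ closedBall(s, r). -/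
open Metric

/-! The function `u ↦ dist s u + dist u w` is convex, so on the convex hull of `S` it is bounded
by its maximum over the vertices `S`. By the triangle inequality through `x`, the ball
`B(x, dist x w)` lies in `B(s, dist s x + dist x w)`. -/

theorem Metric.closedBall_dist_subset_closedBall_dist_add_dist {X : Type*} [PseudoMetricSpace X]
    (s x w : X) : closedBall x (dist x w) ⊆ closedBall s (dist s x + dist x w) :=
  closedBall_subset_closedBall' (by rw [dist_comm x s, add_comm])

section NormedSpace

variable {E : Type*} [SeminormedAddCommGroup E] [NormedSpace ℝ E]

theorem convexOn_univ_dist_add_dist (s w : E) :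
    ConvexOn ℝ Set.univ fun u => dist s u + dist u w := by
  simp_rw [dist_comm s]
  exact (convexOn_univ_dist s).add (convexOn_univ_dist w)

theorem dist_add_dist_le_sup'_of_mem_convexHull {S : Finset E} (hS : S.Nonempty) (s w : E)
    {x : E} (hx : x ∈ convexHull ℝ (S : Set E)) :
    dist s x + dist x w ≤ S.sup' hS fun u => dist s u + dist u w :=
  (convexOn_univ_dist_add_dist s w).le_sup_of_mem_convexHull (Set.subset_univ _) hx

end NormedSpace

/-- Correctness of the conservative sphere over the whole convex cell: with
`r = max_{u ∈ S} (dist s u + dist u w)`, every closed ball `B(x, dist x w)` with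
`x ∈ convexHull ℝ S` is contained in `B(s, r)`. -/
theorem convexHull_balls_subset_conservative_ball
    (S : Finset (EuclideanSpace ℝ (Fin 3))) (hS : S.Nonempty)
    (s w : EuclideanSpace ℝ (Fin 3)) :
    ∀ x ∈ convexHull ℝ (S : Set (EuclideanSpace ℝ (Fin 3))),
      closedBall x (dist x w) ⊆
        closedBall s (S.sup' hS fun u => dist s u + dist u w) :=
  fun x hx => (closedBall_dist_subset_closedBall_dist_add_dist s x w).trans
    (closedBall_subset_closedBall (dist_add_dist_le_sup'_of_mem_convexHull hS s w hx))
end
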